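/- Degeneracy for rational k: let k = q/p with p, q coprime positive integers, and suppose η̃₁ on T² solves the torus traveling-wave equation (whose residual at (α₁,α₂) depends only on the 1d slices α ↦ η̃(α, θ + kα)). Then for any 2π-periodic real-analytic α₀(r), the function η̃₂(α₁,α₂) = η̃₁(α₁ − p·α₀(−qα₁+pα₂), α₂ − q·α₀(−qα₁+pα₂)) satisfies η̃₂(α, θ+kα) = η̃₁(α − p·α₀(pθ), θ + k(α − p·α₀(pθ))), i.e., each slice of η̃₂ is a translate of the corresponding slice of η̃₁; hence η̃₂ is also a solution. -/

import Mathlib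

open Real

/-! On the line `α ↦ (α, θ + kα)` with `k = q/p` the phase `-q·α₁ + p·α₂` is the constant `pθ`,
so the reparametrization moves every point of that line by the same vector `p·α₀(pθ)·(1, k)`,
which is a translation along the line itself. -/

section Slice

variable {p q k : ℝ}

lemma phase_on_slice (hkp : k * p = q) (α θ : ℝ) : -q * α + p * (θ + k * α) = p * θ := by
  rw [← hkp]; ring

lemma shift_along_slice (hkp : k * p = q) (α θ c : ℝ) :
    θ + k * α - q * c = θ + k * (α - p * c) := by
  rw [← hkp]; ring

lemma reparam_slice_eq (hkp : k * p = q) (η : ℝ → ℝ → ℝ) (g : ℝ → ℝ) (α θ : ℝ) :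
    η (α - p * g (-q * α + p * (θ + k * α))) (θ + k * α - q * g (-q * α + p * (θ + k * α))) =
      η (α - p * g (p * θ)) (θ + k * (α - p * g (p * θ))) := by
  rw [phase_on_slice hkp, shift_along_slice hkp]

end Slice

theorem stmt_17_general (p q : ℕ) (hp : 0 < p)
    (k : ℝ) (hk : k = (q : ℝ) / (p : ℝ))
    (η₁ : ℝ → ℝ → ℝ) (α₀ : ℝ → ℝ)
    (Sol : (ℝ → ℝ) → Prop)
    (hSolTrans : ∀ (f : ℝ → ℝ) (s : ℝ), Sol f → Sol (fun a => f (a - s)))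
    (hsol : ∀ θ : ℝ, Sol (fun a => η₁ a (θ + k * a)))
    (η₂ : ℝ → ℝ → ℝ)
    (hη₂ : η₂ = fun a1 a2 => η₁ (a1 - (p : ℝ) * α₀ (-(q : ℝ) * a1 + (p : ℝ) * a2))
        (a2 - (q : ℝ) * α₀ (-(q : ℝ) * a1 + (p : ℝ) * a2))) :
    (∀ α θ : ℝ, η₂ α (θ + k * α) =
      η₁ (α - (p : ℝ) * α₀ ((p : ℝ) * θ))
        (θ + k * (α - (p : ℝ) * α₀ ((p : ℝ) * θ)))) ∧
    (∀ θ : ℝ, Sol (fun a => η₂ a (θ + k * a))) := by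
  have hkp : k * p = q := by rw [hk, div_mul_cancel₀ _ (by positivity)]
  have hslice : ∀ α θ : ℝ, η₂ α (θ + k * α) =
      η₁ (α - p * α₀ (p * θ)) (θ + k * (α - p * α₀ (p * θ))) := by
    intro α θ
    subst hη₂
    exact reparam_slice_eq hkp η₁ α₀ α θ
  refine ⟨hslice, fun θ => ?_⟩
  simpa only [hslice] using hSolTrans _ (p * α₀ (p * θ)) (hsol θ)

/-- Degeneracy for rational `k = q/p`: if `η̃₁` on the torus has all its slices
`α ↦ η̃₁(α, θ + kα)` solving the (translation-invariant) 1d traveling-wave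
equation, then for any `2π`-periodic `α₀` the reparametrized function
`η̃₂(α₁,α₂) = η̃₁(α₁ - p·α₀(-qα₁+pα₂), α₂ - q·α₀(-qα₁+pα₂))` has each slice a
translate of the corresponding slice of `η̃₁`, hence is also a solution. -/
theorem stmt_17 (p q : ℕ) (hp : 0 < p) (hq : 0 < q) (hcop : Nat.Coprime p q)
    (k : ℝ) (hk : k = (q : ℝ) / (p : ℝ))
    (η₁ : ℝ → ℝ → ℝ) (α₀ : ℝ → ℝ) (hper : ∀ r : ℝ, α₀ (r + 2 * π) = α₀ r)
    (Sol : (ℝ → ℝ) → Prop)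
    (hSolTrans : ∀ (f : ℝ → ℝ) (s : ℝ), Sol f → Sol (fun a => f (a - s)))
    (hsol : ∀ θ : ℝ, Sol (fun a => η₁ a (θ + k * a)))
    (η₂ : ℝ → ℝ → ℝ)
    (hη₂ : η₂ = fun a1 a2 => η₁ (a1 - (p : ℝ) * α₀ (-(q : ℝ) * a1 + (p : ℝ) * a2))
        (a2 - (q : ℝ) * α₀ (-(q : ℝ) * a1 + (p : ℝ) * a2))) :
    (∀ α θ : ℝ, η₂ α (θ + k * α) =
      η₁ (α - (p : ℝ) * α₀ ((p : ℝ) * θ))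
        (θ + k * (α - (p : ℝ) * α₀ ((p : ℝ) * θ)))) ∧
    (∀ θ : ℝ, Sol (fun a => η₂ a (θ + k * a))) :=
  stmt_17_general p q hp k hk η₁ α₀ Sol hSolTrans hsol η₂ hη₂
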